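/- Let G be an almost simple group and K a 2-closed permutation group with G* ≤ K ≤ Sym(G). Let L be the minimal block of K, K_𝔏 the subgroup of K mapping each right coset of L to itself, and U the union of the right cosets of L that are equivalent to L (so U is a normal subgroup of G containing L). Then K_𝔏 is the direct product of its constituents on the right cosets of U: a permutation f of G belongs to K_𝔏 if and only if for every right coset Y of U there exists k ∈ K_𝔏 such that f and k agree at every point of Y. -/

import Mathlib

/-- The subgroup of `Sym(A)` consisting of the right translations `x ↦ x * g`. -/
def rightMuls (A : Type*) [Group A] : Subgroup (Equiv.Perm A) :=
  (MulAction.toPermHom Aᵐᵒᵖ A).range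

/-- The holomorph of `A`, i.e. the normalizer in `Sym(A)` of the group of right
translations. -/
def Hol (A : Type*) [Group A] : Subgroup (Equiv.Perm A) :=
  Subgroup.normalizer ((rightMuls A) : Set (Equiv.Perm A))

/-- `D(2,A)`: the subgroup of `Sym(A)` generated by `Hol(A)` and the inversion
permutation `g ↦ g⁻¹`. -/
def D2 (A : Type*) [Group A] : Subgroup (Equiv.Perm A) :=
  Hol A ⊔ Subgroup.closure {Equiv.inv A}

/-- The homomorphism `H × H →* Sym(A)` sending `(h₁, h₂)` to `x ↦ h₁ * x * h₂⁻¹`. -/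
def biTransHom {A : Type*} [Group A] (H : Subgroup A) : H × H →* Equiv.Perm A where
  toFun p := (Equiv.mulLeft (p.1 : A)).trans (Equiv.mulRight ((p.2 : A)⁻¹))
  map_one' := by ext x; simp
  map_mul' p q := by ext x; simp [mul_assoc]

/-- `H*`: the subgroup of `Sym(A)` of all permutations `x ↦ h₁ * x * h₂` with
`h₁, h₂ ∈ H`. -/
def starGroup {A : Type*} [Group A] (H : Subgroup A) : Subgroup (Equiv.Perm A) :=
  (biTransHom H).range

/-- The automorphism group of the Cayley graph `Cay(A, X)`: all permutations `f`
of `A` such that `h * g⁻¹ ∈ X ↔ f h * (f g)⁻¹ ∈ X` for all `g, h`. -/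
def cayAut {A : Type*} [Group A] (X : Set A) : Subgroup (Equiv.Perm A) where
  carrier := {f : Equiv.Perm A | ∀ g h : A, h * g⁻¹ ∈ X ↔ f h * (f g)⁻¹ ∈ X}
  one_mem' := by intro g h; simp
  mul_mem' := by
    intro a b ha hb g h
    simpa [Equiv.Perm.mul_apply] using (hb g h).trans (ha (b g) (b h))
  inv_mem' := by
    intro a ha g h
    simpa using (ha (a⁻¹ g) (a⁻¹ h)).symm

/-- A `K`-block: a subset `B` such that every `k ∈ K` either fixes `B` setwise or
moves it to a disjoint set. -/
def IsBlock {A : Type*} [Group A] (K : Subgroup (Equiv.Perm A)) (B : Set A) : Prop :=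
  ∀ k ∈ K, (k : Equiv.Perm A) '' B = B ∨ ((k : Equiv.Perm A) '' B) ∩ B = ∅

/-- The minimal block of `K`: the intersection of all `K`-blocks of size at least 2
containing the identity. -/
def minBlock {A : Type*} [Group A] (K : Subgroup (Equiv.Perm A)) : Set A :=
  ⋂₀ {B : Set A | IsBlock K B ∧ (1 : A) ∈ B ∧ 2 ≤ B.ncard}

/-- The right coset `L * g`. -/
def rcoset {A : Type*} [Group A] (L : Subgroup A) (g : A) : Set A :=
  {x : A | x * g⁻¹ ∈ L}

/-- `K_𝔏`: the subgroup of all elements of `K` mapping each right coset of `L` to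
itself. -/
def stabCosets {A : Type*} [Group A] (K : Subgroup (Equiv.Perm A)) (L : Subgroup A) :
    Subgroup (Equiv.Perm A) where
  carrier := {f : Equiv.Perm A | f ∈ K ∧ ∀ x : A, f x * x⁻¹ ∈ L}
  one_mem' := ⟨K.one_mem, fun x => by simpa using L.one_mem⟩
  mul_mem' := by
    rintro a b ⟨haK, ha⟩ ⟨hbK, hb⟩
    refine ⟨K.mul_mem haK hbK, fun x => ?_⟩
    have := L.mul_mem (ha (b x)) (hb x)
    simpa [Equiv.Perm.mul_apply, mul_assoc] using this
  inv_mem' := by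
    rintro a ⟨haK, ha⟩
    refine ⟨K.inv_mem haK, fun x => ?_⟩
    have := L.inv_mem (ha (a⁻¹ x))
    simpa [mul_inv_rev] using this

/-- Two subsets `X`, `X'` are equivalent (w.r.t. `K` and `L`) if every element of
`K_𝔏` fixes `X` pointwise iff it fixes `X'` pointwise. -/
def cosetEquiv {A : Type*} [Group A] (K : Subgroup (Equiv.Perm A)) (L : Subgroup A)
    (X X' : Set A) : Prop :=
  ∀ f ∈ stabCosets K L,
    ((∀ x ∈ X, (f : Equiv.Perm A) x = x) ↔ (∀ x ∈ X', (f : Equiv.Perm A) x = x))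

/-- The union `U` of the right cosets of `L` that are equivalent to `L`. -/
def Uset {A : Type*} [Group A] (K : Subgroup (Equiv.Perm A)) (L : Subgroup A) : Set A :=
  {x : A | cosetEquiv K L (L : Set A) (rcoset L x)}

/-- A permutation group `K` is 2-closed if it contains every permutation `f` such
that every pair of points can be moved as by `f` by some element of `K`. -/
def Is2Closed {A : Type*} [Group A] (K : Subgroup (Equiv.Perm A)) : Prop :=
  ∀ f : Equiv.Perm A, (∀ a b : A, ∃ k ∈ K, (k : Equiv.Perm A) a = f a ∧ k b = f b) → f ∈ K

/-!
By 2-closedness, `f ∈ K_𝔏` as soon as, for `u, v` in one right coset of `L` and `x` outside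
`U * u`, some element of `K` fixes `x` and maps `u` to `v`. Together with `u * v⁻¹ ∈ U` this
property is a `K`-invariant equivalence (`MovesOutside`), so the class of `1` is a block inside
`L`; by minimality of `L` it is either `L`, which is what we want, or `{1}`.

In the second case, for every `u` there is an `x ∉ U * u` such that no `l ≠ 1` in `L` carries
`u` to `l * u` through elements of `K` fixing single points of `L * x`: such `l` form a subgroup
normalised by `L ⊇ S`; it would contain `S` and make `u` equivalent to `s * u` for `1 ≠ s ∈ S`.
Hence every element of `K_𝔏` fixing `L * x` pointwise also fixes `L * u` pointwise, and as
`L * x` and `L * u` are not equivalent, the pointwise stabiliser of `L * x` is strictly smaller.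
Starting from a coset with the smallest pointwise stabiliser gives a contradiction.
-/

section

open Equiv

variable {G : Type*} [Group G]

@[simp] lemma mem_rcoset {L : Subgroup G} {x g : G} : x ∈ rcoset L g ↔ x * g⁻¹ ∈ L := Iff.rfl

lemma mem_rcoset_self (L : Subgroup G) (g : G) : g ∈ rcoset L g := by simp

lemma rcoset_eq_of_mul_inv_mem {L : Subgroup G} {a b : G} (h : a * b⁻¹ ∈ L) :
    rcoset L a = rcoset L b := by
  ext x
  have hx : x * b⁻¹ = x * a⁻¹ * (a * b⁻¹) := by group
  simp only [mem_rcoset, hx, L.mul_mem_cancel_right h]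

section Translations

variable {K : Subgroup (Perm G)}

lemma mulLeft_mem (hGK : starGroup (⊤ : Subgroup G) ≤ K) (g : G) : Equiv.mulLeft g ∈ K :=
  hGK ⟨(⟨g, trivial⟩, 1), by ext; simp [biTransHom]⟩

lemma mulRight_mem (hGK : starGroup (⊤ : Subgroup G) ≤ K) (g : G) : Equiv.mulRight g ∈ K :=
  hGK ⟨(1, ⟨g⁻¹, trivial⟩), by ext; simp [biTransHom]⟩

end Translations

lemma le_of_normalizedBy_of_ne_bot {S N : Subgroup G} (hSnormal : S.Normal)
    (hSsimple : IsSimpleGroup S) (hScent : ∀ g : G, (∀ s ∈ S, g * s = s * g) → g = 1)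
    (hN : ∀ s ∈ S, ∀ n ∈ N, s * n * s⁻¹ ∈ N) (hne : N ≠ ⊥) : S ≤ N := by
  have hM : (N.subgroupOf S).Normal :=
    ⟨fun m hm s => by simpa [Subgroup.mem_subgroupOf] using hN s s.2 m hm⟩
  rcases hM.eq_bot_or_eq_top with hbot | htop
  · refine absurd (N.eq_bot_iff_forall.2 fun n hn => hScent n fun s hs => ?_) hne
    have hcommS : n * s * n⁻¹ * s⁻¹ ∈ S := S.mul_mem (hSnormal.conj_mem s hs n) (S.inv_mem hs)
    have hcommN : n * s * n⁻¹ * s⁻¹ ∈ N := by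
      simpa only [mul_assoc] using N.mul_mem hn (hN s hs n⁻¹ (N.inv_mem hn))
    have hcomm : (⟨_, hcommS⟩ : S) ∈ N.subgroupOf S := Subgroup.mem_subgroupOf.2 hcommN
    rw [hbot, Subgroup.mem_bot, Subtype.ext_iff, Subgroup.coe_one] at hcomm
    rw [← mul_inv_eq_one, mul_inv_rev, ← mul_assoc]
    exact hcomm
  · exact Subgroup.subgroupOf_eq_top.1 htop

section Blocks

variable {K : Subgroup (Perm G)} {B : Set G}

lemma IsBlock.image_eq_of_mem (hB : IsBlock K B) {k : Perm G} (hk : k ∈ K) {x : G}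
    (hx : x ∈ B) (hkx : k x ∈ B) : k '' B = B :=
  (hB k hk).resolve_right fun h => (Set.eq_empty_iff_forall_notMem.1 h) (k x) ⟨⟨x, hx, rfl⟩, hkx⟩

lemma isBlock_sInter {F : Set (Set G)} (hF : ∀ B ∈ F, IsBlock K B) : IsBlock K (⋂₀ F) := by
  intro k hk
  refine or_iff_not_imp_right.2 fun hne => ?_
  obtain ⟨_, ⟨x, hx, rfl⟩, hkx⟩ := Set.nonempty_iff_ne_empty.2 hne
  have hkB : ∀ B ∈ F, k '' B = B := fun B hB =>
    (hF B hB).image_eq_of_mem hk (Set.mem_sInter.1 hx B hB) (Set.mem_sInter.1 hkx B hB)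
  ext y
  simp only [Set.mem_image_equiv, Set.mem_sInter]
  exact forall₂_congr fun B hB => by rw [← Set.mem_image_equiv, hkB B hB]

lemma isBlock_setOf_rel {R : G → G → Prop} (hR : Equivalence R)
    (hK : ∀ k ∈ K, ∀ a b, R a b → R (k a) (k b)) (c : G) : IsBlock K {z | R z c} := by
  intro k hk
  refine or_iff_not_imp_right.2 fun hne => ?_
  obtain ⟨_, ⟨w, hw, rfl⟩, hkw⟩ := Set.nonempty_iff_ne_empty.2 hne
  have hkc : R (k c) c := hR.trans (hR.symm (hK k hk _ _ hw)) hkw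
  ext z
  simp only [Set.mem_image_equiv, Set.mem_ofPred_eq]
  constructor
  · intro hz
    simpa using hR.trans (hK k hk _ _ hz) hkc
  · intro hz
    simpa using hK k⁻¹ (K.inv_mem hk) _ _ (hR.trans hz (hR.symm hkc))

lemma IsBlock.mul_mem (hB : IsBlock K B) (hGK : starGroup (⊤ : Subgroup G) ≤ K)
    (h1 : (1 : G) ∈ B) {a b : G} (ha : a ∈ B) (hb : b ∈ B) : a * b ∈ B :=
  hB.image_eq_of_mem (mulRight_mem hGK b) h1 (by simpa using hb) ▸ ⟨a, ha, rfl⟩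

lemma IsBlock.inv_mem (hB : IsBlock K B) (hGK : starGroup (⊤ : Subgroup G) ≤ K)
    (h1 : (1 : G) ∈ B) {b : G} (hb : b ∈ B) : b⁻¹ ∈ B :=
  hB.image_eq_of_mem (mulRight_mem hGK b⁻¹) hb (by simpa using h1) ▸ ⟨1, h1, by simp⟩

lemma IsBlock.conj_mem (hB : IsBlock K B) (hGK : starGroup (⊤ : Subgroup G) ≤ K)
    (h1 : (1 : G) ∈ B) (g : G) {b : G} (hb : b ∈ B) : g * b * g⁻¹ ∈ B :=
  hB.image_eq_of_mem (K.mul_mem (mulLeft_mem hGK g) (mulRight_mem hGK g⁻¹)) h1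
    (by simpa [Perm.mul_apply] using h1) ▸ ⟨b, hb, by simp [Perm.mul_apply, mul_assoc]⟩

def IsBlock.toSubgroup (hB : IsBlock K B) (hGK : starGroup (⊤ : Subgroup G) ≤ K)
    (h1 : (1 : G) ∈ B) : Subgroup G where
  carrier := B
  one_mem' := h1
  mul_mem' := hB.mul_mem hGK h1
  inv_mem' := hB.inv_mem hGK h1

lemma IsBlock.normal {L : Subgroup G} (hL : IsBlock K (L : Set G))
    (hGK : starGroup (⊤ : Subgroup G) ≤ K) : L.Normal :=
  ⟨fun _ hn g => hL.conj_mem hGK L.one_mem g hn⟩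

lemma IsBlock.subset_of_two_le_ncard {S : Subgroup G} (hSnormal : S.Normal)
    (hSsimple : IsSimpleGroup S) (hScent : ∀ g : G, (∀ s ∈ S, g * s = s * g) → g = 1)
    (hB : IsBlock K B) (hGK : starGroup (⊤ : Subgroup G) ≤ K) (h1 : (1 : G) ∈ B)
    (h2 : 2 ≤ B.ncard) : (S : Set G) ⊆ B := by
  refine le_of_normalizedBy_of_ne_bot (N := hB.toSubgroup hGK h1) hSnormal hSsimple hScent
    (fun s _ _ hn => hB.conj_mem hGK h1 s hn) fun hbot => ?_
  have hB1 : B = {1} := congrArg SetLike.coe hbot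
  simp [hB1] at h2

lemma isBlock_minBlock (K : Subgroup (Perm G)) : IsBlock K (minBlock K) :=
  isBlock_sInter fun _ hB => hB.1

lemma minBlock_subset (hB : IsBlock K B) (h1 : (1 : G) ∈ B) (h2 : 2 ≤ B.ncard) :
    minBlock K ⊆ B :=
  Set.sInter_subset_of_mem ⟨hB, h1, h2⟩

lemma subset_minBlock {S : Subgroup G} (hSnormal : S.Normal) (hSsimple : IsSimpleGroup S)
    (hScent : ∀ g : G, (∀ s ∈ S, g * s = s * g) → g = 1)
    (hGK : starGroup (⊤ : Subgroup G) ≤ K) : (S : Set G) ⊆ minBlock K :=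
  Set.subset_sInter fun _ ⟨hB, h1, h2⟩ =>
    hB.subset_of_two_le_ncard hSnormal hSsimple hScent hGK h1 h2

end Blocks

section Cosets

variable {K : Subgroup (Perm G)} {L : Subgroup G}

lemma IsBlock.mul_inv_mem (hL : IsBlock K (L : Set G)) (hGK : starGroup (⊤ : Subgroup G) ≤ K)
    {k : Perm G} (hk : k ∈ K) {x y : G} (h : x * y⁻¹ ∈ L) : k x * (k y)⁻¹ ∈ L := by
  have hk' : Equiv.mulRight (k y)⁻¹ * k * Equiv.mulRight y ∈ K :=
    K.mul_mem (K.mul_mem (mulRight_mem hGK _) hk) (mulRight_mem hGK y)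
  have himg := hL.image_eq_of_mem hk' L.one_mem (by simp [Perm.mul_apply])
  have hmem : (Equiv.mulRight (k y)⁻¹ * k * Equiv.mulRight y) (x * y⁻¹) ∈ (L : Set G) :=
    himg ▸ Set.mem_image_of_mem _ h
  simpa [Perm.mul_apply] using hmem

lemma IsBlock.mul_inv_mem_iff (hL : IsBlock K (L : Set G))
    (hGK : starGroup (⊤ : Subgroup G) ≤ K) {k : Perm G} (hk : k ∈ K) (x y : G) :
    k x * (k y)⁻¹ ∈ L ↔ x * y⁻¹ ∈ L :=
  ⟨fun h => by simpa using hL.mul_inv_mem hGK (K.inv_mem hk) h, hL.mul_inv_mem hGK hk⟩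

lemma IsBlock.image_rcoset (hL : IsBlock K (L : Set G)) (hGK : starGroup (⊤ : Subgroup G) ≤ K)
    {k : Perm G} (hk : k ∈ K) (v : G) : k '' rcoset L v = rcoset L (k v) := by
  ext z
  rw [Set.mem_image_equiv, mem_rcoset, mem_rcoset, ← hL.mul_inv_mem_iff hGK hk]
  simp

lemma IsBlock.conj_mem_stabCosets (hL : IsBlock K (L : Set G))
    (hGK : starGroup (⊤ : Subgroup G) ≤ K) {k f : Perm G} (hk : k ∈ K)
    (hf : f ∈ stabCosets K L) : k⁻¹ * f * k ∈ stabCosets K L :=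
  ⟨K.mul_mem (K.mul_mem (K.inv_mem hk) hf.1) hk, fun x => by
    simpa [Perm.mul_apply] using hL.mul_inv_mem hGK (K.inv_mem hk) (hf.2 (k x))⟩

lemma IsBlock.cosetEquiv_image (hL : IsBlock K (L : Set G))
    (hGK : starGroup (⊤ : Subgroup G) ≤ K) {k : Perm G} (hk : k ∈ K) {X Y : Set G}
    (h : cosetEquiv K L X Y) : cosetEquiv K L (k '' X) (k '' Y) := by
  intro f hf
  have key : ∀ Z : Set G, (∀ z ∈ k '' Z, f z = z) ↔ ∀ z ∈ Z, (k⁻¹ * f * k) z = z := fun Z => by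
    simp only [Set.forall_mem_image, Perm.mul_apply, Perm.inv_eq_iff_eq]
  rw [key, key]
  exact h _ (hL.conj_mem_stabCosets hGK hk hf)

lemma IsBlock.cosetEquiv_image_iff (hL : IsBlock K (L : Set G))
    (hGK : starGroup (⊤ : Subgroup G) ≤ K) {k : Perm G} (hk : k ∈ K) {X Y : Set G} :
    cosetEquiv K L (k '' X) (k '' Y) ↔ cosetEquiv K L X Y := by
  refine ⟨fun h => ?_, hL.cosetEquiv_image hGK hk⟩
  simpa [Set.image_image] using hL.cosetEquiv_image hGK (K.inv_mem hk) h

end Cosets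

section UnionOfEquivalentCosets

variable {K : Subgroup (Perm G)} {L U : Subgroup G}

lemma IsBlock.mul_inv_mem_iff_cosetEquiv (hL : IsBlock K (L : Set G))
    (hGK : starGroup (⊤ : Subgroup G) ≤ K) (hU : (U : Set G) = Uset K L) (u z : G) :
    z * u⁻¹ ∈ U ↔ cosetEquiv K L (rcoset L u) (rcoset L z) := by
  have hL1 : rcoset L 1 = L := by ext; simp
  rw [← SetLike.mem_coe, hU, Uset, Set.mem_ofPred_eq, ← hL1,
    ← hL.cosetEquiv_image_iff hGK (mulRight_mem hGK u), hL.image_rcoset hGK (mulRight_mem hGK u),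
    hL.image_rcoset hGK (mulRight_mem hGK u)]
  simp

lemma IsBlock.le_of_eq_Uset (hL : IsBlock K (L : Set G)) (hGK : starGroup (⊤ : Subgroup G) ≤ K)
    (hU : (U : Set G) = Uset K L) : L ≤ U := fun l hl => by
  have hl1 : rcoset L l = rcoset L 1 := rcoset_eq_of_mul_inv_mem (by simpa using hl)
  simpa using (hL.mul_inv_mem_iff_cosetEquiv hGK hU 1 l).2 (hl1 ▸ fun _ _ => Iff.rfl)

lemma IsBlock.mul_inv_mem_Uset_iff (hL : IsBlock K (L : Set G))
    (hGK : starGroup (⊤ : Subgroup G) ≤ K) (hU : (U : Set G) = Uset K L) {k : Perm G}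
    (hk : k ∈ K) (x y : G) : k x * (k y)⁻¹ ∈ U ↔ x * y⁻¹ ∈ U := by
  rw [hL.mul_inv_mem_iff_cosetEquiv hGK hU, hL.mul_inv_mem_iff_cosetEquiv hGK hU,
    ← hL.image_rcoset hGK hk, ← hL.image_rcoset hGK hk, hL.cosetEquiv_image_iff hGK hk]

def pointwiseStab (K : Subgroup (Perm G)) (L : Subgroup G) (X : Set G) : Set (Perm G) :=
  {f | f ∈ stabCosets K L ∧ ∀ x ∈ X, f x = x}

lemma cosetEquiv_iff_pointwiseStab_eq {X Y : Set G} :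
    cosetEquiv K L X Y ↔ pointwiseStab K L X = pointwiseStab K L Y := by
  simp only [cosetEquiv, pointwiseStab, Set.ext_iff, Set.mem_ofPred_eq, and_congr_right_iff]

end UnionOfEquivalentCosets

section FixingMoves

variable {α : Type*} {K : Subgroup (Perm α)}

def FixingMoves (K : Subgroup (Perm α)) (X : Set α) (a b : α) : Prop :=
  ∀ x ∈ X, ∃ k ∈ K, k x = x ∧ k a = b

lemma fixingMoves_equivalence (X : Set α) : Equivalence (FixingMoves K X) where
  refl _ _ _ := ⟨1, K.one_mem, rfl, rfl⟩
  symm h x hx := by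
    obtain ⟨k, hk, hkx, hab⟩ := h x hx
    exact ⟨k⁻¹, K.inv_mem hk, by rw [Perm.inv_eq_iff_eq, hkx], by rw [Perm.inv_eq_iff_eq, hab]⟩
  trans h₁ h₂ x hx := by
    obtain ⟨k₁, hk₁, hk₁x, hab⟩ := h₁ x hx
    obtain ⟨k₂, hk₂, hk₂x, hbc⟩ := h₂ x hx
    exact ⟨k₂ * k₁, K.mul_mem hk₂ hk₁, by simp [hk₁x, hk₂x], by simp [hab, hbc]⟩

lemma FixingMoves.map {X Y : Set α} {a b : α} {σ : Perm α} (h : FixingMoves K X a b)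
    (hσ : σ ∈ K) (hXY : ∀ y ∈ Y, σ⁻¹ y ∈ X) : FixingMoves K Y (σ a) (σ b) := fun y hy => by
  obtain ⟨k, hk, hkx, hab⟩ := h _ (hXY y hy)
  exact ⟨σ * k * σ⁻¹, K.mul_mem (K.mul_mem hσ hk) (K.inv_mem hσ),
    by rw [Perm.mul_apply, Perm.mul_apply, hkx]; exact σ.apply_symm_apply y, by simp [hab]⟩

end FixingMoves

section MovesOutside

variable {K : Subgroup (Perm G)} {U : Subgroup G}

def MovesOutside (K : Subgroup (Perm G)) (U : Subgroup G) (u v : G) : Prop :=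
  u * v⁻¹ ∈ U ∧ FixingMoves K (rcoset U u)ᶜ u v

lemma movesOutside_equivalence : Equivalence (MovesOutside K U) where
  refl u := ⟨by simp, (fixingMoves_equivalence _).refl u⟩
  symm h := ⟨by simpa using U.inv_mem h.1,
    rcoset_eq_of_mul_inv_mem h.1 ▸ (fixingMoves_equivalence _).symm h.2⟩
  trans h₁ h₂ := ⟨by simpa [mul_assoc] using U.mul_mem h₁.1 h₂.1,
    (fixingMoves_equivalence _).trans h₁.2 ((rcoset_eq_of_mul_inv_mem h₁.1).symm ▸ h₂.2)⟩

lemma MovesOutside.map {u v : G} {σ : Perm G} (h : MovesOutside K U u v) (hσ : σ ∈ K)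
    (hσU : ∀ x y, σ x * (σ y)⁻¹ ∈ U ↔ x * y⁻¹ ∈ U) : MovesOutside K U (σ u) (σ v) :=
  ⟨(hσU u v).2 h.1, h.2.map hσ fun y hy hmem => hy (by simpa using (hσU (σ⁻¹ y) u).2 hmem)⟩

lemma movesOutside_iff_mul_inv (hGK : starGroup (⊤ : Subgroup G) ≤ K)
    (hUK : ∀ k ∈ K, ∀ x y, k x * (k y)⁻¹ ∈ U ↔ x * y⁻¹ ∈ U) (u v : G) :
    MovesOutside K U u v ↔ MovesOutside K U (u * v⁻¹) 1 := by
  constructor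
  · intro h
    simpa using h.map (mulRight_mem hGK v⁻¹) (hUK _ (mulRight_mem hGK v⁻¹))
  · intro h
    simpa using h.map (mulRight_mem hGK v) (hUK _ (mulRight_mem hGK v))

lemma movesOutside_dichotomy [Finite G] {L : Subgroup G} (hL : (L : Set G) = minBlock K)
    (hUK : ∀ k ∈ K, ∀ x y, k x * (k y)⁻¹ ∈ U ↔ x * y⁻¹ ∈ U) :
    (∀ z ∈ L, MovesOutside K U z 1) ∨ ∀ z, MovesOutside K U z 1 → z = 1 := by
  refine or_iff_not_imp_right.2 fun h z hz => ?_
  push Not at h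
  obtain ⟨w, hw, hw1⟩ := h
  have hB := isBlock_setOf_rel movesOutside_equivalence (fun k hk _ _ h => h.map hk (hUK k hk)) 1
  have h2 : 2 ≤ {z | MovesOutside K U z 1}.ncard :=
    (Set.one_lt_ncard).2 ⟨w, hw, 1, movesOutside_equivalence.refl 1, hw1⟩
  exact minBlock_subset hB (movesOutside_equivalence.refl 1) h2 (hL ▸ hz)

end MovesOutside

section ClassSubgroup

variable {E : G → G → Prop}

def classSubgroup (L : Subgroup G) [L.Normal] (hE : Equivalence E)
    (hr : ∀ r ∈ L, ∀ a b, E a b → E (a * r) (b * r)) (u : G) : Subgroup G where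
  carrier := {l | l ∈ L ∧ E u (l * u)}
  one_mem' := ⟨L.one_mem, by simpa using hE.refl u⟩
  mul_mem' := by
    rintro l m ⟨hl, hlu⟩ ⟨hm, hmu⟩
    refine ⟨L.mul_mem hl hm, hE.trans hmu ?_⟩
    simpa [mul_assoc] using hr _ (‹L.Normal›.conj_mem' m hm u) _ _ hlu
  inv_mem' := by
    rintro l ⟨hl, hlu⟩
    refine ⟨L.inv_mem hl, hE.symm ?_⟩
    simpa [mul_assoc] using hr _ (‹L.Normal›.conj_mem' l⁻¹ (L.inv_mem hl) u) _ _ hlu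

lemma conj_mem_classSubgroup {L : Subgroup G} [L.Normal] (hE : Equivalence E)
    (hr : ∀ r ∈ L, ∀ a b, E a b → E (a * r) (b * r))
    (hl : ∀ m ∈ L, ∀ a b, E a b → E (m * a) (m * b)) {u m l : G} (hm : m ∈ L)
    (h : l ∈ classSubgroup L hE hr u) : m * l * m⁻¹ ∈ classSubgroup L hE hr u := by
  refine ⟨‹L.Normal›.conj_mem l h.1 m, ?_⟩
  simpa [mul_assoc] using hr _ (‹L.Normal›.conj_mem' m⁻¹ (L.inv_mem hm) u) _ _ (hl m hm _ _ h.2)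

end ClassSubgroup

section RcosetInvariance

variable {K : Subgroup (Perm G)} {L : Subgroup G} {x₀ a b : G}

lemma FixingMoves.mulLeft_rcoset (hGK : starGroup (⊤ : Subgroup G) ≤ K)
    (h : FixingMoves K (rcoset L x₀) a b) {m : G} (hm : m ∈ L) :
    FixingMoves K (rcoset L x₀) (m * a) (m * b) :=
  h.map (mulLeft_mem hGK m) fun y hy => by
    simpa [Perm.inv_def, mul_assoc] using L.mul_mem (L.inv_mem hm) hy

lemma FixingMoves.mulRight_rcoset [L.Normal] (hGK : starGroup (⊤ : Subgroup G) ≤ K)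
    (h : FixingMoves K (rcoset L x₀) a b) {r : G} (hr : r ∈ L) :
    FixingMoves K (rcoset L x₀) (a * r) (b * r) :=
  h.map (mulRight_mem hGK r) fun y hy => by
    simpa [Perm.inv_def, mul_assoc] using
      L.mul_mem (mem_rcoset.1 hy) (‹L.Normal›.conj_mem _ (L.inv_mem hr) x₀)

end RcosetInvariance

section Dichotomy

variable {K : Subgroup (Perm G)} {L U S : Subgroup G}

lemma exists_fixingMoves_rcoset_eq_one (hSnormal : S.Normal) (hSsimple : IsSimpleGroup S)
    (hScent : ∀ g : G, (∀ s ∈ S, g * s = s * g) → g = 1) [L.Normal]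
    (hGK : starGroup (⊤ : Subgroup G) ≤ K) (hSL : S ≤ L) (hLU : L ≤ U)
    (hbad : ∀ u v, MovesOutside K U u v → u = v) (u : G) :
    ∃ x, x * u⁻¹ ∉ U ∧ ∀ l ∈ L, FixingMoves K (rcoset L x) u (l * u) → l = 1 := by
  by_contra! h
  obtain ⟨⟨s, hs⟩, hs1⟩ := exists_ne (1 : S)
  have hS : ∀ x, x * u⁻¹ ∉ U → S ≤ classSubgroup L (fixingMoves_equivalence (K := K) _)
      (fun r hr _ _ h => h.mulRight_rcoset (x₀ := x) hGK hr) u := fun x hx => by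
    obtain ⟨l, hl, hlu, hl1⟩ := h x hx
    refine le_of_normalizedBy_of_ne_bot hSnormal hSsimple hScent (fun s hs _ hn =>
      conj_mem_classSubgroup _ _ (fun m hm _ _ h => h.mulLeft_rcoset hGK hm) (hSL hs) hn)
      fun hbot => hl1 (Subgroup.mem_bot.1 (hbot ▸ ⟨hl, hlu⟩))
  have hmoves : MovesOutside K U u (s * u) :=
    ⟨by simpa using U.inv_mem (hLU (hSL hs)), fun x hx => (hS x hx hs).2 x (mem_rcoset_self L x)⟩
  exact hs1 (Subtype.ext (by simpa using (hbad _ _ hmoves).symm))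

lemma pointwiseStab_subset_of_fixingMoves [L.Normal] (hGK : starGroup (⊤ : Subgroup G) ≤ K)
    {x₀ u : G} (htriv : ∀ l ∈ L, FixingMoves K (rcoset L x₀) u (l * u) → l = 1) :
    pointwiseStab K L (rcoset L x₀) ⊆ pointwiseStab K L (rcoset L u) := by
  rintro g ⟨hg, hfix⟩
  refine ⟨hg, fun v (hv : v * u⁻¹ ∈ L) => ?_⟩
  have hgv : FixingMoves K (rcoset L x₀) v (g v) := fun x hx => ⟨g, hg.1, hfix x hx, rfl⟩
  have hconj := ‹L.Normal›.conj_mem _ (hg.2 v) (v * u⁻¹)⁻¹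
  have hmove :
      FixingMoves K (rcoset L x₀) u ((v * u⁻¹)⁻¹ * (g v * v⁻¹) * (v * u⁻¹)⁻¹⁻¹ * u) := by
    convert hgv.mulLeft_rcoset hGK (L.inv_mem hv) using 1 <;> group
  exact mul_inv_eq_one.1 (conj_eq_one_iff.1 (htriv _ hconj hmove))

lemma false_of_forall_movesOutside_eq [Finite G] (hSnormal : S.Normal)
    (hSsimple : IsSimpleGroup S) (hScent : ∀ g : G, (∀ s ∈ S, g * s = s * g) → g = 1)
    (hL : IsBlock K (L : Set G)) (hGK : starGroup (⊤ : Subgroup G) ≤ K)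
    (hU : (U : Set G) = Uset K L) (hSL : S ≤ L) (hbad : ∀ u v, MovesOutside K U u v → u = v) :
    False := by
  have := hL.normal hGK
  have hdesc : ∀ u, ∃ x, pointwiseStab K L (rcoset L x) ⊂ pointwiseStab K L (rcoset L u) :=
    fun u => by
      obtain ⟨x, hxu, htriv⟩ := exists_fixingMoves_rcoset_eq_one hSnormal hSsimple hScent hGK hSL
        (hL.le_of_eq_Uset hGK hU) hbad u
      refine ⟨x, (pointwiseStab_subset_of_fixingMoves hGK htriv).ssubset_of_ne fun heq => hxu ?_⟩
      exact (hL.mul_inv_mem_iff_cosetEquiv hGK hU u x).2 (cosetEquiv_iff_pointwiseStab_eq.2 heq.symm)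
  obtain ⟨u, hu⟩ := Finite.exists_min fun u => (pointwiseStab K L (rcoset L u)).ncard
  obtain ⟨x, hx⟩ := hdesc u
  exact (hu x).not_gt (Set.ncard_lt_ncard hx)

lemma movesOutside_of_mul_inv_mem [Finite G] (hSnormal : S.Normal) (hSsimple : IsSimpleGroup S)
    (hScent : ∀ g : G, (∀ s ∈ S, g * s = s * g) → g = 1) (hL : (L : Set G) = minBlock K)
    (hGK : starGroup (⊤ : Subgroup G) ≤ K) (hU : (U : Set G) = Uset K L) (hSL : S ≤ L) :
    ∀ u v, u * v⁻¹ ∈ L → MovesOutside K U u v := by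
  have hLb : IsBlock K (L : Set G) := hL ▸ isBlock_minBlock K
  have hUK := fun k (hk : k ∈ K) => hLb.mul_inv_mem_Uset_iff hGK hU hk
  rcases movesOutside_dichotomy hL hUK with hgood | hbad
  · exact fun u v huv => (movesOutside_iff_mul_inv hGK hUK u v).2 (hgood _ huv)
  · exact (false_of_forall_movesOutside_eq hSnormal hSsimple hScent hLb hGK hU hSL fun u v h =>
      mul_inv_eq_one.1 (hbad _ ((movesOutside_iff_mul_inv hGK hUK u v).1 h))).elim

end Dichotomy

lemma mem_stabCosets_of_forall_exists_eqOn {K : Subgroup (Perm G)} {L U : Subgroup G}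
    (h2cl : Is2Closed K) (hmoves : ∀ u v, u * v⁻¹ ∈ L → MovesOutside K U u v) {f : Perm G}
    (hf : ∀ y, ∃ k ∈ stabCosets K L, ∀ x ∈ rcoset U y, f x = k x) : f ∈ stabCosets K L := by
  choose k hk hfk using hf
  have hfx : ∀ x, f x = k x x := fun x => hfk x x (mem_rcoset_self U x)
  refine ⟨h2cl f fun a b => ?_, fun x => by rw [hfx]; exact (hk x).2 x⟩
  by_cases hab : b * a⁻¹ ∈ U
  · exact ⟨k a, (hk a).1, (hfx a).symm, (hfk a b hab).symm⟩
  -- an element of `K` fixing `a` carries `b` to `(k a)⁻¹ (f b) ∈ L * b`; compose it with `k a`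
  have hw : (k a)⁻¹ (f b) * b⁻¹ ∈ L := by
    simpa [hfx b] using ((stabCosets K L).mul_mem ((stabCosets K L).inv_mem (hk a)) (hk b)).2 b
  obtain ⟨k', hk', hk'a, hk'b⟩ :=
    (hmoves b _ (by simpa using L.inv_mem hw)).2 a fun h => hab (by simpa using U.inv_mem h)
  exact ⟨k a * k', K.mul_mem (hk a).1 hk', by simp [hk'a, hfx a], by simp [hk'b]⟩

end

theorem stabCosets_is_direct_product_general (G : Type*) [Group G] [Fintype G]
    (S : Subgroup G) (hSnormal : S.Normal) (hSsimple : IsSimpleGroup S)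
    (hScent : ∀ g : G, (∀ s ∈ S, g * s = s * g) → g = 1)
    (K : Subgroup (Equiv.Perm G)) (hGK : starGroup (⊤ : Subgroup G) ≤ K)
    (h2cl : Is2Closed K)
    (L : Subgroup G) (hL : (L : Set G) = minBlock K)
    (U : Subgroup G) (hU : (U : Set G) = Uset K L) :
    ∀ f : Equiv.Perm G, f ∈ stabCosets K L ↔
      ∀ y : G, ∃ k ∈ stabCosets K L, ∀ x ∈ rcoset U y, f x = (k : Equiv.Perm G) x := by
  have hSL : S ≤ L := fun s hs => by
    rw [← SetLike.mem_coe, hL]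
    exact subset_minBlock hSnormal hSsimple hScent hGK hs
  have hmoves := movesOutside_of_mul_inv_mem hSnormal hSsimple hScent hL hGK hU hSL
  exact fun f => ⟨fun hf _ => ⟨f, hf, fun _ _ => rfl⟩, mem_stabCosets_of_forall_exists_eqOn h2cl hmoves⟩

/-- for 2-closed `K`, the group `K_𝔏` is the direct product of its
constituents on the right cosets of `U`. -/
theorem stabCosets_is_direct_product (G : Type*) [Group G] [Fintype G]
    (S : Subgroup G) (hSnormal : S.Normal) (hSsimple : IsSimpleGroup S)
    (hSnonabelian : ¬ ∀ a b : S, a * b = b * a)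
    (hScent : ∀ g : G, (∀ s ∈ S, g * s = s * g) → g = 1)
    (K : Subgroup (Equiv.Perm G)) (hGK : starGroup (⊤ : Subgroup G) ≤ K)
    (h2cl : Is2Closed K)
    (L : Subgroup G) (hL : (L : Set G) = minBlock K)
    (U : Subgroup G) (hU : (U : Set G) = Uset K L) :
    ∀ f : Equiv.Perm G, f ∈ stabCosets K L ↔
      ∀ y : G, ∃ k ∈ stabCosets K L, ∀ x ∈ rcoset U y, f x = (k : Equiv.Perm G) x :=
  stabCosets_is_direct_product_general G S hSnormal hSsimple hScent K hGK h2cl L hL U hU
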